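/- arXiv:0707.0707 — 4 statements merged into one kernel-verified Lean document; each statement's English description precedes it below -/
import Mathlib

section
/- Let F : T → T' be a full, coproduct-preserving triangulated functor between triangulated categories with coproducts, and let S be a set of objects of T. Then the essential image of the restriction of F to the smallest localizing triangulated subcategory ⟨S⟩ generated by S equals the smallest localizing triangulated subcategory of T' generated by F(S). -/
open CategoryTheory Category Limits Pretriangulated Opposite

universe w v u v' u'

variable (T : Type u) [Category.{v} T] [HasZeroObject T] [HasShift T ℤ] [Preadditive T]
  [∀ n : ℤ, (shiftFunctor T n).Additive] [Pretriangulated T] [HasCoproducts.{w} T]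

/-- A localizing triangulated subcategory: a class of objects closed under isomorphisms,
shifts, triangles (two-out-of-three) and arbitrary (`Type w`-indexed) coproducts. -/
def IsLocalizing (S : Set T) : Prop :=
  (∀ X ∈ S, ∀ Y : T, Nonempty (X ≅ Y) → Y ∈ S) ∧
  (∀ X ∈ S, ∀ n : ℤ, X⟦n⟧ ∈ S) ∧
  (∀ Tr ∈ distTriang T, Tr.obj₁ ∈ S → Tr.obj₂ ∈ S → Tr.obj₃ ∈ S) ∧
  (∀ (ι : Type w) (f : ι → T), (∀ k, f k ∈ S) → (∐ f) ∈ S)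

/-- The smallest localizing triangulated subcategory containing `S`. -/
def locClosure (S : Set T) : Set T := ⋂₀ {L | IsLocalizing.{w} T L ∧ S ⊆ L}

/-!
Both inclusions are minimality arguments. The objects that `F` sends into `⟨F(S)⟩` form a
localizing subcategory containing `S`, hence containing `⟨S⟩`. Conversely, the essential image
of `⟨S⟩` is localizing: `F` commutes with shifts and coproducts, and for triangles fullness lifts
`F X → F Y` to some `X → Y`, whose cone `F` sends to the third vertex up to isomorphism.
-/

lemma subset_locClosure (S : Set T) : S ⊆ locClosure.{w} T S :=
  fun _ hx _ hL => hL.2 hx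

lemma locClosure_subset {S L : Set T} (hL : IsLocalizing.{w} T L) (hS : S ⊆ L) :
    locClosure.{w} T S ⊆ L := fun _ hx => hx L ⟨hL, hS⟩

lemma isLocalizing_locClosure (S : Set T) : IsLocalizing.{w} T (locClosure.{w} T S) :=
  ⟨fun X hX Y hXY L hL => hL.1.1 X (hX L hL) Y hXY,
    fun X hX n L hL => hL.1.2.1 X (hX L hL) n,
    fun Tr hTr h₁ h₂ L hL => hL.1.2.2.1 Tr hTr (h₁ L hL) (h₂ L hL),
    fun ι f hf L hL => hL.1.2.2.2 ι f (fun k => hf k L hL)⟩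

section

variable {C : Type u} [Category.{v} C] [HasZeroObject C] [HasShift C ℤ] [Preadditive C]
  [∀ n : ℤ, (shiftFunctor C n).Additive] [Pretriangulated C]
  {D : Type u'} [Category.{v'} D] [HasZeroObject D] [HasShift D ℤ] [Preadditive D]
  [∀ n : ℤ, (shiftFunctor D n).Additive] [Pretriangulated D]
  (F : C ⥤ D) [F.CommShift ℤ] [F.IsTriangulated]

lemma CategoryTheory.Functor.exists_distinguished_obj₃_iso [F.Full] {Tr : Triangle D}
    (hTr : Tr ∈ distTriang D) {X Y : C} (e₁ : F.obj X ≅ Tr.obj₁) (e₂ : F.obj Y ≅ Tr.obj₂) :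
    ∃ (Z : C) (f : X ⟶ Y) (g : Y ⟶ Z) (h : Z ⟶ X⟦(1 : ℤ)⟧),
      Triangle.mk f g h ∈ distTriang C ∧ Nonempty (F.obj Z ≅ Tr.obj₃) := by
  obtain ⟨f, hf⟩ := F.map_surjective (e₁.hom ≫ Tr.mor₁ ≫ e₂.inv)
  obtain ⟨Z, g, h, hT⟩ := distinguished_cocone_triangle f
  have comm : F.map f ≫ e₂.hom = e₁.hom ≫ Tr.mor₁ := by simp [hf]
  exact ⟨Z, f, g, h, hT, ⟨Triangle.π₃.mapIso
    (isoTriangleOfIso₁₂ _ _ (F.map_distinguished _ hT) hTr e₁ e₂ comm)⟩⟩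

variable [HasCoproducts.{w} C] [HasCoproducts.{w} D]
  [∀ ι : Type w, PreservesColimitsOfShape (Discrete ι) F]

lemma IsLocalizing.preimage {L : Set D} (hL : IsLocalizing.{w} D L) :
    IsLocalizing.{w} C {X | F.obj X ∈ L} := by
  obtain ⟨hIso, hShift, hTri, hSum⟩ := hL
  exact ⟨fun X hX Y ⟨e⟩ => hIso _ hX _ ⟨F.mapIso e⟩,
    fun X hX n => hIso _ (hShift _ hX n) _ ⟨((F.commShiftIso n).app X).symm⟩,
    fun Tr hTr h₁ h₂ => hTri _ (F.map_distinguished Tr hTr) h₁ h₂,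
    fun ι f hf => hIso _ (hSum ι _ hf) _ ⟨asIso (sigmaComparison F f)⟩⟩

lemma IsLocalizing.essImage [F.Full] {L : Set C} (hL : IsLocalizing.{w} C L) :
    IsLocalizing.{w} D {Y | ∃ X ∈ L, Nonempty (F.obj X ≅ Y)} := by
  obtain ⟨-, hShift, hTri, hSum⟩ := hL
  refine ⟨?_, ?_, ?_, ?_⟩
  · rintro A ⟨X, hX, ⟨e⟩⟩ B ⟨i⟩
    exact ⟨X, hX, ⟨e ≪≫ i⟩⟩
  · rintro A ⟨X, hX, ⟨e⟩⟩ n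
    exact ⟨X⟦n⟧, hShift X hX n,
      ⟨(F.commShiftIso n).app X ≪≫ (shiftFunctor D n).mapIso e⟩⟩
  · rintro Tr hTr ⟨X, hX, ⟨e₁⟩⟩ ⟨Y, hY, ⟨e₂⟩⟩
    obtain ⟨Z, f, g, h, hT, e₃⟩ := F.exists_distinguished_obj₃_iso hTr e₁ e₂
    exact ⟨Z, hTri _ hT hX hY, e₃⟩
  · intro ι f hf
    choose g hg e using hf
    exact ⟨∐ g, hSum ι g hg,
      ⟨(asIso (sigmaComparison F g)).symm ≪≫ Sigma.mapIso (fun k => (e k).some)⟩⟩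

end

/-- For a full, coproduct-preserving triangulated functor `F` and a set of
objects `S`, the essential image of the restriction of `F` to `⟨S⟩` equals `⟨F(S)⟩`. -/
theorem stmt_1 (T' : Type u') [Category.{v'} T'] [HasZeroObject T'] [HasShift T' ℤ]
    [Preadditive T'] [∀ n : ℤ, (shiftFunctor T' n).Additive] [Pretriangulated T']
    [HasCoproducts.{w} T']
    (F : T ⥤ T') [F.Full] [F.CommShift ℤ] [F.IsTriangulated]
    [∀ ι : Type w, PreservesColimitsOfShape (Discrete ι) F]
    (S : Set T) :
    {Y : T' | ∃ X ∈ locClosure.{w} T S, Nonempty (F.obj X ≅ Y)} =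
      locClosure.{w} T' (F.obj '' S) := by
  have hS' := isLocalizing_locClosure.{w} T' (F.obj '' S)
  have hFS : F.obj '' S ⊆ locClosure.{w} T' (F.obj '' S) := subset_locClosure.{w} T' _
  apply subset_antisymm
  · rintro Y ⟨X, hX, ⟨e⟩⟩
    have hFX : F.obj X ∈ locClosure.{w} T' (F.obj '' S) :=
      locClosure_subset.{w} T (hS'.preimage F) (fun s hs => hFS ⟨s, hs, rfl⟩) hX
    exact hS'.1 _ hFX _ ⟨e⟩
  · refine locClosure_subset.{w} T' ((isLocalizing_locClosure.{w} T S).essImage F) ?_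
    rintro _ ⟨s, hs, rfl⟩
    exact ⟨s, subset_locClosure.{w} T S hs, ⟨Iso.refl _⟩⟩
end

section
/- Let j^* : T → T'' be a triangulated functor admitting a fully faithful left adjoint j_!. Then the essential image of j_! equals the kernel of the left adjoint i^* of the inclusion ker j^* ↪ T, and both are equal to the left-orthogonal ^⊥(ker j^*), i.e., the full subcategory of objects X with T(X, Σ^n Y) = 0 for all Y in ker j^* and all integers n. -/
open CategoryTheory Category Limits Pretriangulated Opposite

universe v₂ u₂ v₃ u₃

variable {T : Type u₂} [Category.{v₂} T] [HasZeroObject T] [HasShift T ℤ] [Preadditive T]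
  [∀ n : ℤ, (shiftFunctor T n).Additive] [Pretriangulated T]
variable {T'' : Type u₃} [Category.{v₃} T''] [HasZeroObject T''] [HasShift T'' ℤ] [Preadditive T'']
  [∀ n : ℤ, (shiftFunctor T'' n).Additive] [Pretriangulated T'']

/-!
The counit `jL (jS X) ⟶ X` becomes an isomorphism after applying `jS`, so its cone `Z` lies in
`ker jS`. If `X` is left orthogonal to `ker jS`, then so is `Z`: the left orthogonal is a
triangulated subcategory containing the image of `jL`. Being orthogonal to itself, `Z = 0`,
and `X ≅ jL (jS X)`. On the other side, the unit `X ⟶ iL X` is the universal map into `ker jS`,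
so `iL X = 0` exactly when every such map vanishes. Shifts are harmless since `ker jS` is
stable under them.
-/

namespace CategoryTheory

section

variable {C D : Type*} [Category C] [Category D]

lemma Adjunction.leftOrthogonal_kernel_obj [HasZeroMorphisms C] [HasZeroMorphisms D]
    {L : C ⥤ D} {R : D ⥤ C} (adj : L ⊣ R) (X : C) : R.kernel.leftOrthogonal (L.obj X) := by
  intro Y f hY
  have := adj.isLeftAdjoint
  rw [← (adj.homEquiv _ _).symm_apply_apply f, hY.eq_of_tgt (adj.homEquiv _ _ f) 0,
    Adjunction.homEquiv_counit, Functor.map_zero, zero_comp]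

lemma Adjunction.essImage_le_leftOrthogonal_kernel [HasZeroMorphisms C] [HasZeroMorphisms D]
    {L : C ⥤ D} {R : D ⥤ C} (adj : L ⊣ R) : L.essImage ≤ R.kernel.leftOrthogonal := by
  rintro _ ⟨X, ⟨e⟩⟩
  exact R.kernel.leftOrthogonal.prop_of_iso e (adj.leftOrthogonal_kernel_obj X)

lemma ObjectProperty.isZero_obj_iff_leftOrthogonal [HasZeroMorphisms C] {P : ObjectProperty C}
    {L : C ⥤ P.FullSubcategory} (adj : L ⊣ P.ι) (X : C) :
    IsZero (L.obj X) ↔ P.leftOrthogonal X := by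
  have := adj.isLeftAdjoint
  refine ⟨fun hX Y f hY => ?_, fun hX => ?_⟩
  · rw [← (adj.homEquiv X ⟨Y, hY⟩).apply_symm_apply f,
      hX.eq_of_src ((adj.homEquiv X ⟨Y, hY⟩).symm f) 0, Adjunction.homEquiv_unit,
      Functor.map_zero, comp_zero]
  · rw [IsZero.iff_id_eq_zero, ← adj.left_triangle_components X,
      hX (adj.unit.app X) (L.obj X).property, Functor.map_zero, zero_comp]

lemma ObjectProperty.leftOrthogonal_iff_forall_shift [HasZeroMorphisms C] {A : Type*}
    [AddMonoid A] [HasShift C A] (P : ObjectProperty C) [P.IsStableUnderShift A] (X : C) :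
    P.leftOrthogonal X ↔ ∀ (a : A) (Y : C), P Y → ∀ f : X ⟶ Y⟦a⟧, f = 0 := by
  refine ⟨fun hX a Y hY f => hX f (P.le_shift a Y hY), fun hX Y f hY => ?_⟩
  rw [← cancel_mono ((shiftFunctorZero C A).inv.app Y), zero_comp]
  exact hX 0 Y hY _

instance [HasZeroMorphisms C] {A : Type*} [AddGroup A] [HasShift C A] :
    ObjectProperty.IsStableUnderShift (IsZero (C := C)) A where
  isStableUnderShiftBy a := ⟨fun _ hX => (shiftFunctor C a).map_isZero hX⟩

end

lemma Adjunction.leftOrthogonal_kernel_le_essImage {L : T'' ⥤ T} {R : T ⥤ T''}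
    [R.CommShift ℤ] [R.IsTriangulated] (adj : L ⊣ R) [L.Full] [L.Faithful] :
    R.kernel.leftOrthogonal ≤ L.essImage := by
  intro X hX
  obtain ⟨Z, g, h, hT⟩ := distinguished_cocone_triangle (adj.counit.app X)
  have hZ_ker : R.kernel Z := Triangle.isZero₃_of_isIso₁ _ (R.map_distinguished _ hT)
    (inferInstanceAs (IsIso (R.map (adj.counit.app X))))
  have hZ_orth : R.kernel.leftOrthogonal Z :=
    R.kernel.leftOrthogonal.ext_of_isTriangulatedClosed₃ _ hT
      (adj.leftOrthogonal_kernel_obj _) hX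
  have : IsIso (adj.counit.app X) := (Triangle.isZero₃_iff_isIso₁ _ hT).1
    ((IsZero.iff_id_eq_zero Z).2 (hZ_orth (𝟙 Z) hZ_ker))
  exact adj.mem_essImage_of_counit_isIso X

lemma Adjunction.essImage_eq_leftOrthogonal_kernel {L : T'' ⥤ T} {R : T ⥤ T''}
    [R.CommShift ℤ] [R.IsTriangulated] (adj : L ⊣ R) [L.Full] [L.Faithful] :
    L.essImage = R.kernel.leftOrthogonal :=
  le_antisymm adj.essImage_le_leftOrthogonal_kernel adj.leftOrthogonal_kernel_le_essImage

end CategoryTheory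

theorem stmt_8_general (jS : T ⥤ T'') (jL : T'' ⥤ T)
    [jS.CommShift ℤ] [jS.IsTriangulated]
    (adj : jL ⊣ jS) [jL.Full] [jL.Faithful]
    (iL : T ⥤ ObjectProperty.FullSubcategory fun X : T => IsZero (jS.obj X))
    (adj' : iL ⊣ ObjectProperty.ι fun X : T => IsZero (jS.obj X)) :
    ({X : T | ∃ Y : T'', Nonempty (jL.obj Y ≅ X)} = {X : T | IsZero (iL.obj X)}) ∧
    ({X : T | IsZero (iL.obj X)} =
      {X : T | ∀ (n : ℤ) (Y : T), IsZero (jS.obj Y) → ∀ f : X ⟶ Y⟦n⟧, f = 0}) := by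
  have hiL (X : T) : IsZero (iL.obj X) ↔ jS.kernel.leftOrthogonal X :=
    ObjectProperty.isZero_obj_iff_leftOrthogonal adj' X
  refine ⟨Set.ext fun X => ?_, Set.ext fun X => ?_⟩
  · exact (congrFun adj.essImage_eq_leftOrthogonal_kernel X).to_iff.trans (hiL X).symm
  · exact (hiL X).trans (jS.kernel.leftOrthogonal_iff_forall_shift X)

/-- If `j^*` admits a fully faithful left adjoint `j_!`, and `i^*` is a left
adjoint of the inclusion `ker j^* ↪ T`, then
`essim j_! = ker i^* = ^⊥(ker j^*)`, where `^⊥(ker j^*)` consists of the objects `X` with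
`T(X, Σ^n Y) = 0` for all `Y ∈ ker j^*` and all `n ∈ ℤ`. -/
theorem stmt_8 (jS : T ⥤ T'') (jL : T'' ⥤ T)
    [jS.CommShift ℤ] [jL.CommShift ℤ] [jS.IsTriangulated] [jL.IsTriangulated]
    (adj : jL ⊣ jS) [jL.Full] [jL.Faithful]
    (iL : T ⥤ ObjectProperty.FullSubcategory fun X : T => IsZero (jS.obj X))
    (adj' : iL ⊣ ObjectProperty.ι fun X : T => IsZero (jS.obj X)) :
    ({X : T | ∃ Y : T'', Nonempty (jL.obj Y ≅ X)} = {X : T | IsZero (iL.obj X)}) ∧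
    ({X : T | IsZero (iL.obj X)} =
      {X : T | ∀ (n : ℤ) (Y : T), IsZero (jS.obj Y) → ∀ f : X ⟶ Y⟦n⟧, f = 0}) :=
  stmt_8_general jS jL adj iL adj'
end

section
/- Let j^* : T → T'' be a triangulated functor admitting a fully faithful right adjoint j_*. Then the essential image of j_* equals the kernel of the right adjoint i^! of the inclusion ker j^* ↪ T, and both equal the right-orthogonal (ker j^*)^⊥ = { X : T(Σ^n Y, X) = 0 for all Y ∈ ker j^* and n ∈ ℤ }. -/
/-!
The kernel of `i^!` is the right orthogonal of `ker j^*`, by adjunction. Every object in the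
image of `j_*` is right orthogonal to `ker j^*`, again by adjunction. Conversely, if
`X ∈ (ker j^*)^⊥`, the cone of the unit `X ⟶ j_* j^* X` lies both in `ker j^*` (as `j^*`
inverts the unit when `j_*` is fully faithful) and in the triangulated subcategory
`(ker j^*)^⊥`, so it vanishes and `X` lies in the essential image. Finally `(ker j^*)^⊥` may
be tested against shifts, as `ker j^*` is shift-stable.
-/

open CategoryTheory Limits Pretriangulated

universe v₂ u₂ v₃ u₃

variable {T : Type u₂} [Category.{v₂} T] [HasZeroObject T] [HasShift T ℤ] [Preadditive T]
  [∀ n : ℤ, (shiftFunctor T n).Additive] [Pretriangulated T]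
variable {T'' : Type u₃} [Category.{v₃} T''] [HasZeroObject T''] [HasShift T'' ℤ] [Preadditive T'']
  [∀ n : ℤ, (shiftFunctor T'' n).Additive] [Pretriangulated T'']

namespace CategoryTheory

instance ObjectProperty.isStableUnderShift_isZero {C : Type*} [Category C] [Preadditive C]
    {A : Type*} [AddMonoid A] [HasShift C A] [∀ a : A, (shiftFunctor C a).Additive] :
    ObjectProperty.IsStableUnderShift (IsZero (C := C)) A where
  isStableUnderShiftBy a := ⟨fun _ hX => (shiftFunctor C a).map_isZero hX⟩

lemma ObjectProperty.rightOrthogonal_iff_forall_shift {C : Type*} [Category C]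
    [HasZeroMorphisms C] {A : Type*} [AddMonoid A] [HasShift C A]
    (P : ObjectProperty C) [P.IsStableUnderShift A] (X : C) :
    P.rightOrthogonal X ↔ ∀ (a : A) (Y : C), P Y → ∀ f : Y⟦a⟧ ⟶ X, f = 0 := by
  refine ⟨fun hX a Y hY f => hX f (P.le_shift a Y hY), fun hX Y f hY => ?_⟩
  rw [← cancel_epi ((shiftFunctorZero C A).hom.app Y), comp_zero]
  exact hX 0 Y hY _

namespace Adjunction

variable {C D : Type*} [Category C] [Category D] {F : C ⥤ D} {G : D ⥤ C}

lemma eq_zero_of_isZero_obj_left [HasZeroMorphisms C] (adj : F ⊣ G) {Z : C}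
    (hZ : IsZero (F.obj Z)) {W : D} (g : Z ⟶ G.obj W) : g = 0 := by
  rw [← (adj.homEquiv Z W).apply_symm_apply g, ← (adj.homEquiv Z W).apply_symm_apply 0,
    hZ.eq_of_src ((adj.homEquiv Z W).symm g) ((adj.homEquiv Z W).symm 0)]

lemma essImage_le_rightOrthogonal_kernel [HasZeroMorphisms C] (adj : F ⊣ G) :
    G.essImage ≤ F.kernel.rightOrthogonal := by
  rintro X ⟨Y, ⟨e⟩⟩
  exact F.kernel.rightOrthogonal.prop_of_iso e fun _ g hZ => adj.eq_zero_of_isZero_obj_left hZ g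

lemma isZero_obj_right_iff [HasZeroMorphisms C] [HasZeroMorphisms D] (adj : F ⊣ G) (X : D) :
    IsZero (G.obj X) ↔ ∀ (W : C) (g : F.obj W ⟶ X), g = 0 := by
  refine ⟨fun hX W g => (adj.homEquiv W X).injective (hX.eq_of_tgt _ _), fun hX => ?_⟩
  rw [IsZero.iff_id_eq_zero]
  exact (adj.homEquiv (G.obj X) X).symm.injective ((hX _ _).trans (hX _ _).symm)

end Adjunction

lemma ObjectProperty.isZero_obj_iff_rightOrthogonal {C : Type*} [Category C] [Preadditive C]
    (P : ObjectProperty C) {R : C ⥤ P.FullSubcategory} (adj : P.ι ⊣ R) (X : C) :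
    IsZero (R.obj X) ↔ P.rightOrthogonal X := by
  rw [adj.isZero_obj_right_iff]
  exact ⟨fun hX Y f hY => hX ⟨Y, hY⟩ f, fun hX W g => hX g W.property⟩

variable {C D : Type*} [Category C] [HasZeroObject C] [HasShift C ℤ] [Preadditive C]
  [∀ n : ℤ, (shiftFunctor C n).Additive] [Pretriangulated C]
  [Category D] [HasZeroObject D] [HasShift D ℤ] [Preadditive D]
  [∀ n : ℤ, (shiftFunctor D n).Additive] [Pretriangulated D]

lemma Adjunction.mem_essImage_of_rightOrthogonal_kernel {F : C ⥤ D} {G : D ⥤ C}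
    [F.CommShift ℤ] [F.IsTriangulated] (adj : F ⊣ G) [G.Full] [G.Faithful] {X : C}
    (hX : F.kernel.rightOrthogonal X) : G.essImage X := by
  rw [← adj.isIso_unit_app_iff_mem_essImage]
  obtain ⟨Z, _, _, hT⟩ := distinguished_cocone_triangle₁ (adj.unit.app X)
  have hZ_kernel : F.kernel Z :=
    Triangle.isZero₁_of_isIso₂ _ (F.map_distinguished _ hT)
      (inferInstanceAs (IsIso (F.map (adj.unit.app X))))
  have hZ_orth : F.kernel.rightOrthogonal Z :=
    F.kernel.rightOrthogonal.ext_of_isTriangulatedClosed₂ _ (inv_rot_of_distTriang _ hT)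
      (F.kernel.rightOrthogonal.le_shift _ _
        (adj.essImage_le_rightOrthogonal_kernel _ (G.obj_mem_essImage _))) hX
  exact (Triangle.isZero₁_iff_isIso₂ _ hT).1 ((IsZero.iff_id_eq_zero Z).2 (hZ_orth _ hZ_kernel))

end CategoryTheory

theorem stmt_9_general (jS : T ⥤ T'') (jR : T'' ⥤ T)
    [jS.CommShift ℤ] [jS.IsTriangulated]
    (adj : jS ⊣ jR) [jR.Full] [jR.Faithful]
    (iR : T ⥤ ObjectProperty.FullSubcategory fun X : T => IsZero (jS.obj X))
    (adj' : (ObjectProperty.ι fun X : T => IsZero (jS.obj X)) ⊣ iR) :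
    ({X : T | ∃ Y : T'', Nonempty (jR.obj Y ≅ X)} = {X : T | IsZero (iR.obj X)}) ∧
    ({X : T | IsZero (iR.obj X)} =
      {X : T | ∀ (n : ℤ) (Y : T), IsZero (jS.obj Y) → ∀ f : Y⟦n⟧ ⟶ X, f = 0}) := by
  have hker (X : T) : IsZero (iR.obj X) ↔ jS.kernel.rightOrthogonal X :=
    jS.kernel.isZero_obj_iff_rightOrthogonal adj' X
  have himage (X : T) : jR.essImage X ↔ jS.kernel.rightOrthogonal X :=
    ⟨adj.essImage_le_rightOrthogonal_kernel X, adj.mem_essImage_of_rightOrthogonal_kernel⟩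
  exact ⟨Set.ext fun X => (himage X).trans (hker X).symm,
    Set.ext fun X => (hker X).trans (jS.kernel.rightOrthogonal_iff_forall_shift X)⟩

/-- If `j^*` admits a fully faithful right adjoint `j_*`, and `i^!` is a
right adjoint of the inclusion `ker j^* ↪ T`, then
`essim j_* = ker i^! = (ker j^*)^⊥`, where `(ker j^*)^⊥` consists of the objects `X` with
`T(Σ^n Y, X) = 0` for all `Y ∈ ker j^*` and all `n ∈ ℤ`. -/
theorem stmt_9 (jS : T ⥤ T'') (jR : T'' ⥤ T)
    [jS.CommShift ℤ] [jR.CommShift ℤ] [jS.IsTriangulated] [jR.IsTriangulated]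
    (adj : jS ⊣ jR) [jR.Full] [jR.Faithful]
    (iR : T ⥤ ObjectProperty.FullSubcategory fun X : T => IsZero (jS.obj X))
    (adj' : (ObjectProperty.ι fun X : T => IsZero (jS.obj X)) ⊣ iR) :
    ({X : T | ∃ Y : T'', Nonempty (jR.obj Y ≅ X)} = {X : T | IsZero (iR.obj X)}) ∧
    ({X : T | IsZero (iR.obj X)} =
      {X : T | ∀ (n : ℤ) (Y : T), IsZero (jS.obj Y) → ∀ f : Y⟦n⟧ ⟶ X, f = 0}) :=
  stmt_9_general jS jR adj iR adj'
end

section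
/- Let F : T → T' be a coproduct-preserving, fully faithful triangulated functor between triangulated categories with coproducts. If C is a compact object of T, then F(C) is self-compact in T', i.e., the restriction of T'(F(C), −) to the localizing subcategory ⟨F(C)⟩ generated by F(C) preserves coproducts. -/
open CategoryTheory Category Limits Pretriangulated Opposite

universe w v u v' u'

variable (T : Type u) [Category.{v} T] [HasZeroObject T] [HasShift T ℤ] [Preadditive T]
  [∀ n : ℤ, (shiftFunctor T n).Additive] [Pretriangulated T] [HasCoproducts.{w} T]

/-! Full faithfulness of `F` identifies `T'(F C, F -)` with `T(C, -)`, so `T'(F C, -)` preserves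
every coproduct of objects `F Xᵢ`: `F` carries `∐ Xᵢ` to it and `T(C, -)` preserves `∐ Xᵢ`.
Every object of `⟨F C⟩` is of the form `F X`, because the essential image of `F` is localizing
(cones lift along the full functor `F`, coproducts because `F` preserves them) and contains
`F C`. -/

namespace CategoryTheory

lemma preservesColimit_of_preservesColimit_comp {J A B E : Type*} [Category J] [Category A]
    [Category B] [Category E] (K : J ⥤ A) [HasColimit K] (F : A ⥤ B) (G : B ⥤ E)
    [PreservesColimit K F] [PreservesColimit K (F ⋙ G)] : PreservesColimit (K ⋙ F) G :=
  preservesColimit_of_preserves_colimit_cocone (isColimitOfPreserves F (colimit.isColimit K))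
    (isColimitOfPreserves (F ⋙ G) (colimit.isColimit K))

universe v₁ v₂ u₁ u₂

/- The hom groups of `A` and `B` lie in different universes, so the two corepresentable functors
are compared after lifting to a common one; `AddCommGrpCat.uliftFunctor` preserves and
reflects colimits. -/
noncomputable def Functor.preadditiveCoyonedaObjCompUliftIso {A : Type u₁} {B : Type u₂}
    [Category.{v₁} A] [Category.{v₂} B] [Preadditive A] [Preadditive B] (F : A ⥤ B)
    [F.Full] [F.Faithful] [F.Additive] (X : A) :
    preadditiveCoyoneda.obj (op X) ⋙ AddCommGrpCat.uliftFunctor.{v₂} ≅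
      F ⋙ preadditiveCoyoneda.obj (op (F.obj X)) ⋙ AddCommGrpCat.uliftFunctor.{v₁} :=
  NatIso.ofComponents
    (fun _ => (AddEquiv.ulift.trans <| (AddEquiv.ofBijective F.mapAddHom
      ⟨F.map_injective, F.map_surjective⟩).trans AddEquiv.ulift.symm).toAddCommGrpIso)
    (fun g => by ext ⟨h⟩; exact congrArg ULift.up (F.map_comp h g))

variable {T} {T' : Type u'} [Category.{v'} T'] [HasZeroObject T'] [HasShift T' ℤ]
  [Preadditive T'] [∀ n : ℤ, (shiftFunctor T' n).Additive] [Pretriangulated T']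
  [HasCoproducts.{w} T']

lemma Functor.isLocalizing_essImage (F : T ⥤ T') [F.Full] [F.CommShift ℤ] [F.IsTriangulated]
    [∀ ι : Type w, PreservesColimitsOfShape (Discrete ι) F] :
    IsLocalizing.{w} T' F.essImage := by
  refine ⟨?_, ?_, ?_, ?_⟩
  · rintro X ⟨A, ⟨e⟩⟩ Y ⟨e'⟩
    exact ⟨A, ⟨e ≪≫ e'⟩⟩
  · rintro X ⟨A, ⟨e⟩⟩ n
    exact ⟨A⟦n⟧, ⟨(F.commShiftIso n).app A ≪≫ (shiftFunctor T' n).mapIso e⟩⟩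
  · rintro Tr hTr ⟨A₁, ⟨e₁⟩⟩ ⟨A₂, ⟨e₂⟩⟩
    obtain ⟨Z, a, b, hT⟩ :=
      distinguished_cocone_triangle (F.preimage (e₁.hom ≫ Tr.mor₁ ≫ e₂.inv))
    have comm : F.map (F.preimage (e₁.hom ≫ Tr.mor₁ ≫ e₂.inv)) ≫ e₂.hom = e₁.hom ≫ Tr.mor₁ := by
      simp
    exact ⟨Z, ⟨Triangle.π₃.mapIso
      (isoTriangleOfIso₁₂ _ _ (F.map_distinguished _ hT) hTr e₁ e₂ comm)⟩⟩
  · intro ι f hf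
    choose x hx using hf
    exact ⟨∐ x, ⟨preservesColimitIso F (Discrete.functor x) ≪≫
      HasColimit.isoOfNatIso (Discrete.natIso fun k => (hx k.as).some)⟩⟩

end CategoryTheory

/-- If `F : T ⥤ T'` is a coproduct-preserving, fully faithful triangulated
functor and `C` is compact in `T`, then `F(C)` is self-compact in `T'`: the restriction
of `T'(F(C), −)` to the localizing subcategory `⟨F(C)⟩` preserves coproducts. -/
theorem stmt_14 (T' : Type u') [Category.{v'} T'] [HasZeroObject T'] [HasShift T' ℤ]
    [Preadditive T'] [∀ n : ℤ, (shiftFunctor T' n).Additive] [Pretriangulated T']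
    [HasCoproducts.{w} T']
    (F : T ⥤ T') [F.Full] [F.Faithful] [F.CommShift ℤ] [F.IsTriangulated]
    [∀ ι : Type w, PreservesColimitsOfShape (Discrete ι) F]
    (C : T)
    (hC : ∀ ι : Type w, PreservesColimitsOfShape (Discrete ι)
      (preadditiveCoyoneda.obj (op C))) :
    ∀ (ι : Type w) (f : ι → T'), (∀ k, f k ∈ locClosure.{w} T' {F.obj C}) →
      PreservesColimit (Discrete.functor f) (preadditiveCoyoneda.obj (op (F.obj C))) := by
  intro ι f hf
  have hess : ∀ k, F.essImage (f k) := fun k =>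
    hf k _ ⟨F.isLocalizing_essImage, Set.singleton_subset_iff.mpr (F.obj_mem_essImage C)⟩
  choose x hx using hess
  have := hC ι
  have : PreservesColimit (Discrete.functor x)
      (F ⋙ preadditiveCoyoneda.obj (op (F.obj C)) ⋙ AddCommGrpCat.uliftFunctor.{v}) :=
    preservesColimit_of_natIso _ (F.preadditiveCoyonedaObjCompUliftIso C)
  have := preservesColimit_of_preservesColimit_comp (Discrete.functor x) F
    (preadditiveCoyoneda.obj (op (F.obj C)) ⋙ AddCommGrpCat.uliftFunctor.{v})
  have := preservesColimit_of_reflects_of_preserves (K := Discrete.functor x ⋙ F)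
    (preadditiveCoyoneda.obj (op (F.obj C))) AddCommGrpCat.uliftFunctor.{v}
  exact preservesColimit_of_iso_diagram _
    (Discrete.natIso fun k => (hx k.as).some : Discrete.functor x ⋙ F ≅ Discrete.functor f)
end
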